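/- Let m ≥ 2 and let μ(m) be the largest prime power dividing m. Then for all n, n' ≥ μ(m), the number of congruence preserving functions ℤ/nℤ → ℤ/mℤ equals the number of congruence preserving functions ℤ/n'ℤ → ℤ/mℤ; i.e., CP(n, m) does not depend on n for n ≥ μ(m). -/

import Mathlib

/-- `ulcm k` is the least common multiple of `1, 2, …, k`, with `ulcm 0 = 1`. -/
def ulcm (k : ℕ) : ℕ := (Finset.Icc 1 k).lcm id

/-- `mu m` is the largest prime power dividing `m`. -/
def mu (m : ℕ) : ℕ := m.primeFactors.sup fun p => p ^ m.factorization p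

/-- `f : ZMod n → ZMod m` is congruence preserving. -/
def CongPres (n m : ℕ) (f : ZMod n → ZMod m) : Prop :=
  ∀ d : ℕ, ∀ hd : d ∣ m, ∀ a b : ℕ, a < n → b < n → a ≡ b [MOD d] →
    ZMod.castHom hd (ZMod d) (f a) = ZMod.castHom hd (ZMod d) (f b)

/-- `CP n m` is the number of congruence preserving functions `ZMod n → ZMod m`. -/
noncomputable def CP (n m : ℕ) : ℕ := Nat.card {f : ZMod n → ZMod m // CongPres n m f}

/-!
A congruence preserving `f : ℤ/nℤ → ℤ/mℤ` is determined by its values on `0, …, μ(m) - 1`: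
for each prime power `q = p ^ e` exactly dividing `m` we have `f a ≡ f (a mod q) (mod q)`, and
these residues pin down `f a` by the Chinese remainder theorem. Conversely, any congruence
preserving function on `0, …, μ(m) - 1` extends to `ℤ/nℤ` by the same recipe, so restriction is a
bijection and `CP(n, m) = CP(μ(m), m)` for every `n ≥ μ(m)`.
-/

open Nat

lemma castHom_eq_castHom_iff {m d : ℕ} [NeZero m] (hd : d ∣ m) (x y : ZMod m) :
    ZMod.castHom hd (ZMod d) x = ZMod.castHom hd (ZMod d) y ↔ x.val ≡ y.val [MOD d] := by
  simp only [ZMod.castHom_apply, ZMod.cast_eq_val, ZMod.natCast_eq_natCast_iff]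

lemma congPres_iff_val_modEq {n m : ℕ} [NeZero m] (f : ZMod n → ZMod m) :
    CongPres n m f ↔ ∀ d, d ∣ m → ∀ a b : ℕ, a < n → b < n → a ≡ b [MOD d] →
      (f a).val ≡ (f b).val [MOD d] := by
  simp only [CongPres, castHom_eq_castHom_iff]

lemma Nat.modEq_of_forall_prime_pow_dvd {d u v : ℕ}
    (h : ∀ p k : ℕ, p.Prime → k ≠ 0 → p ^ k ∣ d → u ≡ v [MOD p ^ k]) : u ≡ v [MOD d] := by
  rw [Nat.modEq_iff_dvd, Int.natCast_dvd, Nat.dvd_iff_prime_pow_dvd_dvd]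
  intro p k hp hpk
  rcases eq_or_ne k 0 with rfl | hk
  · simp
  · exact Int.natCast_dvd.1 (Nat.modEq_iff_dvd.1 (h p k hp hk hpk))

lemma mem_primeFactors_of_prime_pow_dvd {m p k : ℕ} [NeZero m] (hp : p.Prime) (hk : k ≠ 0)
    (h : p ^ k ∣ m) : p ∈ m.primeFactors :=
  Nat.mem_primeFactors.2 ⟨hp, (dvd_pow_self p hk).trans h, NeZero.ne m⟩

lemma ZMod.eq_of_forall_val_modEq_ordProj {m : ℕ} [NeZero m] {x y : ZMod m}
    (h : ∀ p ∈ m.primeFactors, x.val ≡ y.val [MOD ordProj[p] m]) : x = y := by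
  refine ZMod.val_injective m (Nat.ModEq.eq_of_lt_of_lt ?_ x.val_lt y.val_lt)
  refine Nat.modEq_of_forall_prime_pow_dvd fun p k hp hk hpk => ?_
  exact (h p (mem_primeFactors_of_prime_pow_dvd hp hk hpk)).of_dvd
    ((hp.pow_dvd_iff_dvd_ordProj (NeZero.ne m)).1 hpk)

lemma ordProj_le_mu {m p : ℕ} (hp : p ∈ m.primeFactors) : ordProj[p] m ≤ mu m :=
  Finset.le_sup (f := fun p => p ^ m.factorization p) hp

lemma mu_pos {m : ℕ} (hm : 1 < m) : 0 < mu m := by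
  obtain ⟨p, hp⟩ := Nat.nonempty_primeFactors.2 hm
  exact (ordProj_pos m p).trans_le (ordProj_le_mu hp)

lemma pairwise_coprime_ordProj (m : ℕ) :
    Set.Pairwise (m.primeFactors : Set ℕ) (Function.onFun Nat.Coprime fun p => ordProj[p] m) :=
  fun _ hp _ hq hpq => ((Nat.coprime_primes (prime_of_mem_primeFactors hp)
    (prime_of_mem_primeFactors hq)).2 hpq).pow _ _

lemma CongPres.val_modEq_val_mod {n m d a : ℕ} [NeZero m] {f : ZMod n → ZMod m}
    (hf : CongPres n m f) (hd : d ∣ m) (hdn : d ≤ n) (ha : a < n) :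
    (f a).val ≡ (f (a % d : ℕ)).val [MOD d] :=
  (congPres_iff_val_modEq f).1 hf d hd a (a % d) ha
    ((Nat.mod_lt a (Nat.pos_of_dvd_of_pos hd (NeZero.pos m))).trans_le hdn)
    (Nat.mod_modEq a d).symm

section Restriction

variable {n m M : ℕ}

def restrictInitial (M : ℕ) (f : ZMod n → ZMod m) : ZMod M → ZMod m := fun x => f x.val

lemma restrictInitial_natCast (f : ZMod n → ZMod m) {a : ℕ} (ha : a < M) :
    restrictInitial M f a = f a := by
  simp only [restrictInitial, ZMod.val_natCast_of_lt ha]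

lemma congPres_restrictInitial {f : ZMod n → ZMod m} (hf : CongPres n m f) (hMn : M ≤ n) :
    CongPres M m (restrictInitial M f) := by
  intro d hd a b ha hb hab
  rw [restrictInitial_natCast f ha, restrictInitial_natCast f hb]
  exact hf d hd a b (ha.trans_le hMn) (hb.trans_le hMn) hab

lemma CongPres.eq_of_restrictInitial_eq [NeZero m] [NeZero n] {f g : ZMod n → ZMod m}
    (hf : CongPres n m f) (hg : CongPres n m g) (hM : mu m ≤ M) (hMn : M ≤ n)
    (h : restrictInitial M f = restrictInitial M g) : f = g := by
  funext x
  rw [← ZMod.natCast_zmod_val x]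
  refine ZMod.eq_of_forall_val_modEq_ordProj fun p hp => ?_
  have hqM : ordProj[p] m ≤ M := (ordProj_le_mu hp).trans hM
  have hmod : x.val % ordProj[p] m < M := (Nat.mod_lt _ (ordProj_pos m p)).trans_le hqM
  calc (f x.val).val
      ≡ (f (x.val % ordProj[p] m : ℕ)).val [MOD ordProj[p] m] :=
        hf.val_modEq_val_mod (ordProj_dvd m p) (hqM.trans hMn) x.val_lt
    _ = (g (x.val % ordProj[p] m : ℕ)).val := by
        rw [← restrictInitial_natCast f hmod, h, restrictInitial_natCast g hmod]
    _ ≡ (g x.val).val [MOD ordProj[p] m] :=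
        (hg.val_modEq_val_mod (ordProj_dvd m p) (hqM.trans hMn) x.val_lt).symm

def crtExtension (g : ZMod M → ZMod m) (a : ℕ) : ZMod m :=
  (Nat.chineseRemainderOfFinset (fun p => (g (a % ordProj[p] m : ℕ)).val)
    (fun p => ordProj[p] m) m.primeFactors (fun p _ => (ordProj_pos m p).ne')
    (pairwise_coprime_ordProj m) : ℕ)

lemma val_crtExtension_modEq (g : ZMod M → ZMod m) (a : ℕ) {p : ℕ} (hp : p ∈ m.primeFactors) :
    (crtExtension g a).val ≡ (g (a % ordProj[p] m : ℕ)).val [MOD ordProj[p] m] := by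
  rw [crtExtension, ZMod.val_natCast]
  exact ((Nat.mod_modEq _ m).of_dvd (ordProj_dvd m p)).trans
    ((Nat.chineseRemainderOfFinset _ _ _ _ _).2 p hp)

lemma congPres_crtExtension [NeZero m] {g : ZMod M → ZMod m} (hg : CongPres M m g)
    (hM : mu m ≤ M) (n : ℕ) : CongPres n m (fun x : ZMod n => crtExtension g x.val) := by
  rw [congPres_iff_val_modEq]
  intro d hd a b ha hb hab
  simp only [ZMod.val_natCast_of_lt ha, ZMod.val_natCast_of_lt hb]
  refine Nat.modEq_of_forall_prime_pow_dvd fun p k hp hk hpk => ?_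
  have hpm := mem_primeFactors_of_prime_pow_dvd hp hk (hpk.trans hd)
  have hdvd : p ^ k ∣ ordProj[p] m := (hp.pow_dvd_iff_dvd_ordProj (NeZero.ne m)).1 (hpk.trans hd)
  have hlt (c : ℕ) : c % ordProj[p] m < M :=
    (Nat.mod_lt _ (ordProj_pos m p)).trans_le ((ordProj_le_mu hpm).trans hM)
  have hmod : a % ordProj[p] m ≡ b % ordProj[p] m [MOD p ^ k] :=
    ((Nat.mod_modEq a _).of_dvd hdvd).trans
      ((hab.of_dvd hpk).trans ((Nat.mod_modEq b _).of_dvd hdvd).symm)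
  calc (crtExtension g a).val
      ≡ (g (a % ordProj[p] m : ℕ)).val [MOD p ^ k] := (val_crtExtension_modEq g a hpm).of_dvd hdvd
    _ ≡ (g (b % ordProj[p] m : ℕ)).val [MOD p ^ k] :=
        (congPres_iff_val_modEq g).1 hg _ (hpk.trans hd) _ _ (hlt a) (hlt b) hmod
    _ ≡ (crtExtension g b).val [MOD p ^ k] := ((val_crtExtension_modEq g b hpm).of_dvd hdvd).symm

lemma restrictInitial_crtExtension [NeZero m] [NeZero M] {g : ZMod M → ZMod m}
    (hg : CongPres M m g) (hM : mu m ≤ M) (hMn : M ≤ n) :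
    restrictInitial M (fun x : ZMod n => crtExtension g x.val) = g := by
  funext x
  refine ZMod.eq_of_forall_val_modEq_ordProj fun p hp => ?_
  simp only [restrictInitial, ZMod.val_natCast_of_lt (x.val_lt.trans_le hMn)]
  refine (val_crtExtension_modEq g x.val hp).trans ?_
  simpa only [ZMod.natCast_zmod_val] using
    (hg.val_modEq_val_mod (ordProj_dvd m p) ((ordProj_le_mu hp).trans hM) x.val_lt).symm

theorem CP_eq_CP_of_mu_le [NeZero m] [NeZero M] (hM : mu m ≤ M) (hMn : M ≤ n) :
    CP n m = CP M m := by
  have : NeZero n := ⟨((NeZero.pos M).trans_le hMn).ne'⟩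
  refine Nat.card_congr (Equiv.ofBijective
    (fun f => ⟨restrictInitial M f.1, congPres_restrictInitial f.2 hMn⟩) ⟨?_, ?_⟩)
  · rintro ⟨f, hf⟩ ⟨g, hg⟩ h
    exact Subtype.ext (hf.eq_of_restrictInitial_eq hg hM hMn (congrArg Subtype.val h))
  · rintro ⟨g, hg⟩
    exact ⟨⟨_, congPres_crtExtension hg hM n⟩, Subtype.ext (restrictInitial_crtExtension hg hM hMn)⟩

end Restriction

theorem stmt_18 (m : ℕ) (hm : 2 ≤ m) (n n' : ℕ) (hn : mu m ≤ n) (hn' : mu m ≤ n') :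
    CP n m = CP n' m := by
  have : NeZero m := ⟨by omega⟩
  have : NeZero (mu m) := ⟨(mu_pos hm).ne'⟩
  rw [CP_eq_CP_of_mu_le le_rfl hn, CP_eq_CP_of_mu_le le_rfl hn']
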